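/- arXiv:1405.3846 — 4 statements merged into one kernel-verified Lean document; each statement's English description precedes it below -/
import Mathlib

section
/- Let w(x₁,x₂,x₃) = C_K·(x₃+√(3/2))·(x₁²+x₂²+(x₃+√(3/2))²)^{-3/2} on {x₃ > -√(3/2)}, with C_K = 1/(2π). Then the determinant of the Hessian matrix of w at any point x with x₃ > -√(3/2) equals C_K³ · 27·(x₃+√(3/2))·(x₁²+x₂²+2(x₃+√(3/2))²) / (x₁²+x₂²+(x₃+√(3/2))²)^{15/2}, and in particular this determinant is strictly positive. -/
open Real

/-- Partial derivative in the first variable of a function of three real variables. -/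
noncomputable def pd1 (f : ℝ → ℝ → ℝ → ℝ) : ℝ → ℝ → ℝ → ℝ :=
  fun x₁ x₂ x₃ => deriv (fun t => f t x₂ x₃) x₁

/-- Partial derivative in the second variable. -/
noncomputable def pd2 (f : ℝ → ℝ → ℝ → ℝ) : ℝ → ℝ → ℝ → ℝ :=
  fun x₁ x₂ x₃ => deriv (fun t => f x₁ t x₃) x₂

/-- Partial derivative in the third variable. -/
noncomputable def pd3 (f : ℝ → ℝ → ℝ → ℝ) : ℝ → ℝ → ℝ → ℝ :=
  fun x₁ x₂ x₃ => deriv (fun t => f x₁ x₂ t) x₃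

/-- The translated kernel `w(x) = C_K (x₃+√(3/2))(x₁²+x₂²+(x₃+√(3/2))²)^{-3/2}`
with `C_K = 1/(2π)`. -/
noncomputable def wker (x₁ x₂ x₃ : ℝ) : ℝ :=
  (2 * π)⁻¹ * (x₃ + Real.sqrt (3/2)) *
    (x₁^2 + x₂^2 + (x₃ + Real.sqrt (3/2))^2) ^ (-(3:ℝ)/2)

/-! ### Auxiliary first-derivative lemmas -/

lemma hd_base1 (a b k : ℝ) : HasDerivAt (fun u : ℝ => u^2 + b^2 + k^2) (2*a) a := by
  simpa using ((hasDerivAt_pow 2 a).add_const (b^2)).add_const (k^2)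

lemma hd_base2 (a b k : ℝ) : HasDerivAt (fun u : ℝ => a^2 + u^2 + k^2) (2*b) b := by
  simpa using (((hasDerivAt_pow 2 b).const_add (a^2)).add_const (k^2))

lemma hd_base3 (a b t s : ℝ) :
    HasDerivAt (fun u : ℝ => a^2 + b^2 + (u+s)^2) (2*(t+s)) t := by
  simpa using ((((hasDerivAt_id' _).add_const s).pow 2).const_add (a^2 + b^2))

lemma pd1_w (a b t : ℝ) (hq : a^2 + b^2 + (t + Real.sqrt (3/2))^2 ≠ 0) :
    pd1 wker a b t
      = -3*(2*π)⁻¹*(t + Real.sqrt (3/2))*a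
          * (a^2 + b^2 + (t + Real.sqrt (3/2))^2) ^ (-(5:ℝ)/2) := by
  have h1 := (((hd_base1 a b (t + Real.sqrt (3/2))).rpow_const
      (p := -(3:ℝ)/2) (Or.inl hq)).const_mul ((2*π)⁻¹ * (t + Real.sqrt (3/2))))
  have : pd1 wker a b t
      = (2*π)⁻¹ * (t + Real.sqrt (3/2)) *
        (2*a * (-(3:ℝ)/2) * (a^2 + b^2 + (t + Real.sqrt (3/2))^2) ^ (-(3:ℝ)/2 - 1)) :=
    h1.deriv
  rw [this, show -(3:ℝ)/2 - 1 = -(5:ℝ)/2 by norm_num]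
  ring

lemma pd2_w (a b t : ℝ) (hq : a^2 + b^2 + (t + Real.sqrt (3/2))^2 ≠ 0) :
    pd2 wker a b t
      = -3*(2*π)⁻¹*(t + Real.sqrt (3/2))*b
          * (a^2 + b^2 + (t + Real.sqrt (3/2))^2) ^ (-(5:ℝ)/2) := by
  have h1 := (((hd_base2 a b (t + Real.sqrt (3/2))).rpow_const
      (p := -(3:ℝ)/2) (Or.inl hq)).const_mul ((2*π)⁻¹ * (t + Real.sqrt (3/2))))
  have : pd2 wker a b t
      = (2*π)⁻¹ * (t + Real.sqrt (3/2)) *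
        (2*b * (-(3:ℝ)/2) * (a^2 + b^2 + (t + Real.sqrt (3/2))^2) ^ (-(3:ℝ)/2 - 1)) :=
    h1.deriv
  rw [this, show -(3:ℝ)/2 - 1 = -(5:ℝ)/2 by norm_num]
  ring

lemma pd3_w (a b t : ℝ) (hq : a^2 + b^2 + (t + Real.sqrt (3/2))^2 ≠ 0) :
    pd3 wker a b t
      = (2*π)⁻¹ * (a^2 + b^2 + (t + Real.sqrt (3/2))^2) ^ (-(3:ℝ)/2)
        - 3*(2*π)⁻¹*(t + Real.sqrt (3/2))^2
          * (a^2 + b^2 + (t + Real.sqrt (3/2))^2) ^ (-(5:ℝ)/2) := by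
  set s := Real.sqrt (3/2)
  have hf : HasDerivAt (fun u : ℝ => (2*π)⁻¹ * (u + s)) ((2*π)⁻¹ * 1) t :=
    ((hasDerivAt_id' _).add_const s).const_mul _
  have hg := (hd_base3 a b t s).rpow_const (p := -(3:ℝ)/2) (Or.inl hq)
  have h1 := hf.mul hg
  have : pd3 wker a b t
      = (2*π)⁻¹ * 1 * ((a^2 + b^2 + (t+s)^2) ^ (-(3:ℝ)/2))
        + (2*π)⁻¹ * (t + s) *
          (2*(t+s) * (-(3:ℝ)/2) * (a^2 + b^2 + (t+s)^2) ^ (-(3:ℝ)/2 - 1)) :=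
    h1.deriv
  rw [this, show -(3:ℝ)/2 - 1 = -(5:ℝ)/2 by norm_num]
  ring

set_option maxHeartbeats 2000000 in
/-- The Hessian determinant of `w` at a point with `x₃ > -√(3/2)` equals
`C_K³ · 27(x₃+√(3/2))(x₁²+x₂²+2(x₃+√(3/2))²)/(x₁²+x₂²+(x₃+√(3/2))²)^{15/2}`,
and in particular it is strictly positive. -/
theorem stmt_5 (x₁ x₂ x₃ : ℝ) (hx₃ : -Real.sqrt (3/2) < x₃) :
    Matrix.det !![pd1 (pd1 wker) x₁ x₂ x₃, pd1 (pd2 wker) x₁ x₂ x₃, pd1 (pd3 wker) x₁ x₂ x₃;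
                  pd2 (pd1 wker) x₁ x₂ x₃, pd2 (pd2 wker) x₁ x₂ x₃, pd2 (pd3 wker) x₁ x₂ x₃;
                  pd3 (pd1 wker) x₁ x₂ x₃, pd3 (pd2 wker) x₁ x₂ x₃, pd3 (pd3 wker) x₁ x₂ x₃]
      = ((2 * π)⁻¹)^3 *
          (27 * (x₃ + Real.sqrt (3/2)) * (x₁^2 + x₂^2 + 2*(x₃ + Real.sqrt (3/2))^2)) /
          (x₁^2 + x₂^2 + (x₃ + Real.sqrt (3/2))^2) ^ ((15:ℝ)/2)
    ∧ 0 < Matrix.det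
        !![pd1 (pd1 wker) x₁ x₂ x₃, pd1 (pd2 wker) x₁ x₂ x₃, pd1 (pd3 wker) x₁ x₂ x₃;
           pd2 (pd1 wker) x₁ x₂ x₃, pd2 (pd2 wker) x₁ x₂ x₃, pd2 (pd3 wker) x₁ x₂ x₃;
           pd3 (pd1 wker) x₁ x₂ x₃, pd3 (pd2 wker) x₁ x₂ x₃, pd3 (pd3 wker) x₁ x₂ x₃] := by
  set s := Real.sqrt (3/2) with hs
  set c : ℝ := (2*π)⁻¹ with hc
  have hz : 0 < x₃ + s := by linarith
  have hQ : 0 < x₁^2 + x₂^2 + (x₃ + s)^2 := by positivity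
  set Q : ℝ := x₁^2 + x₂^2 + (x₃ + s)^2 with hQdef
  -- entry (1,1)
  have E11 : pd1 (pd1 wker) x₁ x₂ x₃
      = (-3*c*(x₃+s)) * (1 * Q ^ (-(5:ℝ)/2)
          + x₁ * (2*x₁ * (-(5:ℝ)/2) * Q ^ (-(5:ℝ)/2 - 1))) := by
    have hfun : (fun u => pd1 wker u x₂ x₃)
        = fun u => (-3*c*(x₃+s)) * (u * (u^2 + x₂^2 + (x₃+s)^2) ^ (-(5:ℝ)/2)) := by
      funext u
      rw [pd1_w u x₂ x₃ (by positivity)]; try ring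
    have hD : HasDerivAt
        (fun u => (-3*c*(x₃+s)) * (u * (u^2 + x₂^2 + (x₃+s)^2) ^ (-(5:ℝ)/2)))
        ((-3*c*(x₃+s)) * (1 * Q ^ (-(5:ℝ)/2)
          + x₁ * (2*x₁ * (-(5:ℝ)/2) * Q ^ (-(5:ℝ)/2 - 1)))) x₁ :=
      ((hasDerivAt_id' _).mul ((hd_base1 x₁ x₂ (x₃+s)).rpow_const
        (Or.inl hQ.ne'))).const_mul _
    show deriv (fun u => pd1 wker u x₂ x₃) x₁ = _
    rw [hfun]
    exact hD.deriv
  -- entry (2,1)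
  have E21 : pd2 (pd1 wker) x₁ x₂ x₃
      = (-3*c*(x₃+s)*x₁) * (2*x₂ * (-(5:ℝ)/2) * Q ^ (-(5:ℝ)/2 - 1)) := by
    have hfun : (fun u => pd1 wker x₁ u x₃)
        = fun u => (-3*c*(x₃+s)*x₁) * ((x₁^2 + u^2 + (x₃+s)^2) ^ (-(5:ℝ)/2)) := by
      funext u
      rw [pd1_w x₁ u x₃ (by positivity)]; try ring
    have hD : HasDerivAt
        (fun u => (-3*c*(x₃+s)*x₁) * ((x₁^2 + u^2 + (x₃+s)^2) ^ (-(5:ℝ)/2)))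
        ((-3*c*(x₃+s)*x₁) * (2*x₂ * (-(5:ℝ)/2) * Q ^ (-(5:ℝ)/2 - 1))) x₂ :=
      (((hd_base2 x₁ x₂ (x₃+s)).rpow_const (Or.inl hQ.ne'))).const_mul _
    show deriv (fun u => pd1 wker x₁ u x₃) x₂ = _
    rw [hfun]
    exact hD.deriv
  -- entry (3,1)
  have E31 : pd3 (pd1 wker) x₁ x₂ x₃
      = (-3*c*x₁) * (1 * Q ^ (-(5:ℝ)/2)
          + (x₃+s) * (2*(x₃+s) * (-(5:ℝ)/2) * Q ^ (-(5:ℝ)/2 - 1))) := by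
    have hev : (fun u => pd1 wker x₁ x₂ u)
        =ᶠ[nhds x₃] fun u => (-3*c*x₁) * ((u+s) * (x₁^2 + x₂^2 + (u+s)^2) ^ (-(5:ℝ)/2)) := by
      filter_upwards [eventually_gt_nhds hx₃] with u hu
      have hu' : 0 < u + s := by linarith
      rw [pd1_w x₁ x₂ u (by positivity)]; try ring
    have hD : HasDerivAt
        (fun u => (-3*c*x₁) * ((u+s) * (x₁^2 + x₂^2 + (u+s)^2) ^ (-(5:ℝ)/2)))
        ((-3*c*x₁) * (1 * Q ^ (-(5:ℝ)/2)
          + (x₃+s) * (2*(x₃+s) * (-(5:ℝ)/2) * Q ^ (-(5:ℝ)/2 - 1)))) x₃ :=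
      (((hasDerivAt_id' _).add_const s).mul ((hd_base3 x₁ x₂ x₃ s).rpow_const
        (Or.inl hQ.ne'))).const_mul _
    show deriv (fun u => pd1 wker x₁ x₂ u) x₃ = _
    rw [hev.deriv_eq]
    exact hD.deriv
  -- entry (1,2)
  have E12 : pd1 (pd2 wker) x₁ x₂ x₃
      = (-3*c*(x₃+s)*x₂) * (2*x₁ * (-(5:ℝ)/2) * Q ^ (-(5:ℝ)/2 - 1)) := by
    have hfun : (fun u => pd2 wker u x₂ x₃)
        = fun u => (-3*c*(x₃+s)*x₂) * ((u^2 + x₂^2 + (x₃+s)^2) ^ (-(5:ℝ)/2)) := by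
      funext u
      rw [pd2_w u x₂ x₃ (by positivity)]; try ring
    have hD : HasDerivAt
        (fun u => (-3*c*(x₃+s)*x₂) * ((u^2 + x₂^2 + (x₃+s)^2) ^ (-(5:ℝ)/2)))
        ((-3*c*(x₃+s)*x₂) * (2*x₁ * (-(5:ℝ)/2) * Q ^ (-(5:ℝ)/2 - 1))) x₁ :=
      (((hd_base1 x₁ x₂ (x₃+s)).rpow_const (Or.inl hQ.ne'))).const_mul _
    show deriv (fun u => pd2 wker u x₂ x₃) x₁ = _
    rw [hfun]
    exact hD.deriv
  -- entry (2,2)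
  have E22 : pd2 (pd2 wker) x₁ x₂ x₃
      = (-3*c*(x₃+s)) * (1 * Q ^ (-(5:ℝ)/2)
          + x₂ * (2*x₂ * (-(5:ℝ)/2) * Q ^ (-(5:ℝ)/2 - 1))) := by
    have hfun : (fun u => pd2 wker x₁ u x₃)
        = fun u => (-3*c*(x₃+s)) * (u * (x₁^2 + u^2 + (x₃+s)^2) ^ (-(5:ℝ)/2)) := by
      funext u
      rw [pd2_w x₁ u x₃ (by positivity)]; try ring
    have hD : HasDerivAt
        (fun u => (-3*c*(x₃+s)) * (u * (x₁^2 + u^2 + (x₃+s)^2) ^ (-(5:ℝ)/2)))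
        ((-3*c*(x₃+s)) * (1 * Q ^ (-(5:ℝ)/2)
          + x₂ * (2*x₂ * (-(5:ℝ)/2) * Q ^ (-(5:ℝ)/2 - 1)))) x₂ :=
      ((hasDerivAt_id' _).mul ((hd_base2 x₁ x₂ (x₃+s)).rpow_const
        (Or.inl hQ.ne'))).const_mul _
    show deriv (fun u => pd2 wker x₁ u x₃) x₂ = _
    rw [hfun]
    exact hD.deriv
  -- entry (3,2)
  have E32 : pd3 (pd2 wker) x₁ x₂ x₃
      = (-3*c*x₂) * (1 * Q ^ (-(5:ℝ)/2)
          + (x₃+s) * (2*(x₃+s) * (-(5:ℝ)/2) * Q ^ (-(5:ℝ)/2 - 1))) := by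
    have hev : (fun u => pd2 wker x₁ x₂ u)
        =ᶠ[nhds x₃] fun u => (-3*c*x₂) * ((u+s) * (x₁^2 + x₂^2 + (u+s)^2) ^ (-(5:ℝ)/2)) := by
      filter_upwards [eventually_gt_nhds hx₃] with u hu
      have hu' : 0 < u + s := by linarith
      rw [pd2_w x₁ x₂ u (by positivity)]; try ring
    have hD : HasDerivAt
        (fun u => (-3*c*x₂) * ((u+s) * (x₁^2 + x₂^2 + (u+s)^2) ^ (-(5:ℝ)/2)))
        ((-3*c*x₂) * (1 * Q ^ (-(5:ℝ)/2)
          + (x₃+s) * (2*(x₃+s) * (-(5:ℝ)/2) * Q ^ (-(5:ℝ)/2 - 1)))) x₃ :=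
      (((hasDerivAt_id' _).add_const s).mul ((hd_base3 x₁ x₂ x₃ s).rpow_const
        (Or.inl hQ.ne'))).const_mul _
    show deriv (fun u => pd2 wker x₁ x₂ u) x₃ = _
    rw [hev.deriv_eq]
    exact hD.deriv
  -- entry (1,3)
  have E13 : pd1 (pd3 wker) x₁ x₂ x₃
      = c * (2*x₁ * (-(3:ℝ)/2) * Q ^ (-(3:ℝ)/2 - 1))
        - (3*c*(x₃+s)^2) * (2*x₁ * (-(5:ℝ)/2) * Q ^ (-(5:ℝ)/2 - 1)) := by
    have hfun : (fun u => pd3 wker u x₂ x₃)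
        = fun u => c * ((u^2 + x₂^2 + (x₃+s)^2) ^ (-(3:ℝ)/2))
            - (3*c*(x₃+s)^2) * ((u^2 + x₂^2 + (x₃+s)^2) ^ (-(5:ℝ)/2)) := by
      funext u
      rw [pd3_w u x₂ x₃ (by positivity)]; try ring
    have hD : HasDerivAt
        (fun u => c * ((u^2 + x₂^2 + (x₃+s)^2) ^ (-(3:ℝ)/2))
            - (3*c*(x₃+s)^2) * ((u^2 + x₂^2 + (x₃+s)^2) ^ (-(5:ℝ)/2)))
        (c * (2*x₁ * (-(3:ℝ)/2) * Q ^ (-(3:ℝ)/2 - 1))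
          - (3*c*(x₃+s)^2) * (2*x₁ * (-(5:ℝ)/2) * Q ^ (-(5:ℝ)/2 - 1))) x₁ :=
      ((((hd_base1 x₁ x₂ (x₃+s)).rpow_const (Or.inl hQ.ne'))).const_mul c).sub
        ((((hd_base1 x₁ x₂ (x₃+s)).rpow_const (Or.inl hQ.ne'))).const_mul _)
    show deriv (fun u => pd3 wker u x₂ x₃) x₁ = _
    rw [hfun]
    exact hD.deriv
  -- entry (2,3)
  have E23 : pd2 (pd3 wker) x₁ x₂ x₃
      = c * (2*x₂ * (-(3:ℝ)/2) * Q ^ (-(3:ℝ)/2 - 1))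
        - (3*c*(x₃+s)^2) * (2*x₂ * (-(5:ℝ)/2) * Q ^ (-(5:ℝ)/2 - 1)) := by
    have hfun : (fun u => pd3 wker x₁ u x₃)
        = fun u => c * ((x₁^2 + u^2 + (x₃+s)^2) ^ (-(3:ℝ)/2))
            - (3*c*(x₃+s)^2) * ((x₁^2 + u^2 + (x₃+s)^2) ^ (-(5:ℝ)/2)) := by
      funext u
      rw [pd3_w x₁ u x₃ (by positivity)]; try ring
    have hD : HasDerivAt
        (fun u => c * ((x₁^2 + u^2 + (x₃+s)^2) ^ (-(3:ℝ)/2))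
            - (3*c*(x₃+s)^2) * ((x₁^2 + u^2 + (x₃+s)^2) ^ (-(5:ℝ)/2)))
        (c * (2*x₂ * (-(3:ℝ)/2) * Q ^ (-(3:ℝ)/2 - 1))
          - (3*c*(x₃+s)^2) * (2*x₂ * (-(5:ℝ)/2) * Q ^ (-(5:ℝ)/2 - 1))) x₂ :=
      ((((hd_base2 x₁ x₂ (x₃+s)).rpow_const (Or.inl hQ.ne'))).const_mul c).sub
        ((((hd_base2 x₁ x₂ (x₃+s)).rpow_const (Or.inl hQ.ne'))).const_mul _)
    show deriv (fun u => pd3 wker x₁ u x₃) x₂ = _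
    rw [hfun]
    exact hD.deriv
  -- entry (3,3)
  have E33 : pd3 (pd3 wker) x₁ x₂ x₃
      = c * (2*(x₃+s) * (-(3:ℝ)/2) * Q ^ (-(3:ℝ)/2 - 1))
        - ((3*c) * (2 * (x₃+s)^1 * 1) * Q ^ (-(5:ℝ)/2)
            + (3*c) * (x₃+s)^2 * (2*(x₃+s) * (-(5:ℝ)/2) * Q ^ (-(5:ℝ)/2 - 1))) := by
    have hev : (fun u => pd3 wker x₁ x₂ u)
        =ᶠ[nhds x₃] fun u => c * ((x₁^2 + x₂^2 + (u+s)^2) ^ (-(3:ℝ)/2))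
            - (3*c) * (u+s)^2 * ((x₁^2 + x₂^2 + (u+s)^2) ^ (-(5:ℝ)/2)) := by
      filter_upwards [eventually_gt_nhds hx₃] with u hu
      have hu' : 0 < u + s := by linarith
      rw [pd3_w x₁ x₂ u (by positivity)]; try ring
    have hf2 : HasDerivAt (fun u : ℝ => (3*c) * (u+s)^2)
        ((3*c) * (2 * (x₃+s)^1 * 1)) x₃ :=
      (((hasDerivAt_id' _).add_const s).pow 2).const_mul _
    have hD : HasDerivAt
        (fun u => c * ((x₁^2 + x₂^2 + (u+s)^2) ^ (-(3:ℝ)/2))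
            - (3*c) * (u+s)^2 * ((x₁^2 + x₂^2 + (u+s)^2) ^ (-(5:ℝ)/2)))
        (c * (2*(x₃+s) * (-(3:ℝ)/2) * Q ^ (-(3:ℝ)/2 - 1))
          - ((3*c) * (2 * (x₃+s)^1 * 1) * Q ^ (-(5:ℝ)/2)
            + (3*c) * (x₃+s)^2 * (2*(x₃+s) * (-(5:ℝ)/2) * Q ^ (-(5:ℝ)/2 - 1)))) x₃ :=
      ((((hd_base3 x₁ x₂ x₃ s).rpow_const (Or.inl hQ.ne'))).const_mul c).sub
        (hf2.mul (((hd_base3 x₁ x₂ x₃ s).rpow_const (Or.inl hQ.ne'))))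
    show deriv (fun u => pd3 wker x₁ x₂ u) x₃ = _
    rw [hev.deriv_eq]
    exact hD.deriv
  -- now compute the determinant
  have hexp1 : -(3:ℝ)/2 - 1 = -(5:ℝ)/2 := by norm_num
  have hexp2 : -(5:ℝ)/2 - 1 = -(7:ℝ)/2 := by norm_num
  have hA5 : Q ^ (-(5:ℝ)/2) = Q ^ (-(7:ℝ)/2) * Q := by
    rw [← Real.rpow_add_one hQ.ne']
    norm_num
  have hB3 : (Q ^ (-(7:ℝ)/2))^3 * Q^3 = Q ^ (-((15:ℝ)/2)) := by
    rw [← Real.rpow_natCast (Q ^ (-(7:ℝ)/2)) 3, ← Real.rpow_natCast Q 3,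
      ← Real.rpow_mul hQ.le, ← Real.rpow_add hQ]
    norm_num
  have hdet : Matrix.det
        !![pd1 (pd1 wker) x₁ x₂ x₃, pd1 (pd2 wker) x₁ x₂ x₃, pd1 (pd3 wker) x₁ x₂ x₃;
           pd2 (pd1 wker) x₁ x₂ x₃, pd2 (pd2 wker) x₁ x₂ x₃, pd2 (pd3 wker) x₁ x₂ x₃;
           pd3 (pd1 wker) x₁ x₂ x₃, pd3 (pd2 wker) x₁ x₂ x₃, pd3 (pd3 wker) x₁ x₂ x₃]
      = c^3 * (27 * (x₃ + s) * (x₁^2 + x₂^2 + 2*(x₃ + s)^2)) / Q ^ ((15:ℝ)/2) := by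
    rw [Matrix.det_fin_three]
    simp only [Matrix.cons_val', Matrix.cons_val_zero, Matrix.cons_val_one, Matrix.head_cons,
      Matrix.empty_val', Matrix.cons_val_fin_one, Matrix.head_fin_const,
      Matrix.cons_val_two, Matrix.tail_cons, Matrix.of_apply]
    have hfin : c ^ 3 * (27 * (x₃ + s) * (x₁^2 + x₂^2 + 2*(x₃ + s)^2)) / Q ^ ((15:ℝ)/2)
        = c ^ 3 * (27 * (x₃ + s) * (x₁^2 + x₂^2 + 2*(x₃ + s)^2))
            * ((Q ^ (-(7:ℝ)/2))^3 * Q^3) := by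
      rw [hB3, Real.rpow_neg hQ.le]
      exact div_eq_mul_inv _ _
    rw [E11, E12, E13, E21, E22, E23, E31, E32, E33, hexp1, hexp2, hA5, hfin, hQdef]
    ring
  refine ⟨hdet, ?_⟩
  rw [hdet]
  have h1 : (0:ℝ) < c^3 := by
    rw [hc]; positivity
  have h2 : (0:ℝ) < 27 * (x₃ + s) * (x₁^2 + x₂^2 + 2*(x₃ + s)^2) := by
    have h2' : (0:ℝ) < x₁^2 + x₂^2 + 2*(x₃ + s)^2 := by
      nlinarith [sq_nonneg x₁, sq_nonneg x₂, mul_pos hz hz]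
    exact mul_pos (mul_pos (by norm_num) hz) h2'
  have h3 : (0:ℝ) < Q ^ ((15:ℝ)/2) := Real.rpow_pos_of_pos hQ _
  positivity
end

section
/- For any h > 0 and x₃ with 0 < x₃ ≤ h/4, the integral over the disc B((h,0), h/2) ⊂ ℝ² of the function ((h-y₁)² + y₂² - 2x₃²)/((h-y₁)² + y₂² + x₃²)^{5/2} with respect to (y₁,y₂) equals -π h²/(2(h²/4 + x₃²)^{3/2}). In particular its absolute value is at most 4π/h. -/
open MeasureTheory Real

/-- The integral over the disc `B((h,0), h/2) ⊂ ℝ²` of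
`((h-y₁)² + y₂² - 2x₃²)/((h-y₁)² + y₂² + x₃²)^{5/2}` equals
`-πh²/(2(h²/4 + x₃²)^{3/2})`; in particular its absolute value is at most `4π/h`. -/
theorem stmt_9 (h x₃ : ℝ) (hh : 0 < h) (hx : 0 < x₃) (hx' : x₃ ≤ h/4) :
    (∫ y in Metric.ball ((WithLp.equiv 2 (Fin 2 → ℝ)).symm ![h, 0] :
          EuclideanSpace ℝ (Fin 2)) (h/2),
        ((h - y 0)^2 + (y 1)^2 - 2*x₃^2) / ((h - y 0)^2 + (y 1)^2 + x₃^2) ^ ((5:ℝ)/2))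
      = -(π * h^2) / (2 * (h^2/4 + x₃^2) ^ ((3:ℝ)/2))
    ∧ |∫ y in Metric.ball ((WithLp.equiv 2 (Fin 2 → ℝ)).symm ![h, 0] :
          EuclideanSpace ℝ (Fin 2)) (h/2),
        ((h - y 0)^2 + (y 1)^2 - 2*x₃^2) / ((h - y 0)^2 + (y 1)^2 + x₃^2) ^ ((5:ℝ)/2)|
      ≤ 4 * π / h := by
  set c : EuclideanSpace ℝ (Fin 2) := (WithLp.equiv 2 (Fin 2 → ℝ)).symm ![h, 0] with hcdef
  set R : ℝ := h/2 with hRdef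
  have hR0 : 0 < R := by positivity
  set A : ℝ := h^2/4 + x₃^2 with hAdef
  have hA0 : 0 < A := by positivity
  set g : ℝ → ℝ := fun r => (r^2 - 2*x₃^2) / (r^2 + x₃^2) ^ ((5:ℝ)/2) with hgdef
  set G : ℝ → ℝ := Set.indicator (Set.Iio R) g with hGdef
  set F : EuclideanSpace ℝ (Fin 2) → ℝ := fun y =>
    ((h - y 0)^2 + (y 1)^2 - 2*x₃^2) / ((h - y 0)^2 + (y 1)^2 + x₃^2) ^ ((5:ℝ)/2) with hFdef
  have hptwise : ∀ y : EuclideanSpace ℝ (Fin 2),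
      (Metric.ball c R).indicator F y = G ‖y - c‖ := by
    intro y
    have hnorm : ‖y - c‖ ^ 2 = (h - y 0)^2 + (y 1)^2 := by
      rw [EuclideanSpace.norm_eq, Real.sq_sqrt (by positivity)]
      simp [hcdef, Fin.sum_univ_two]
      ring
    have hmem : y ∈ Metric.ball c R ↔ ‖y - c‖ ∈ Set.Iio R := by
      rw [Metric.mem_ball, dist_eq_norm, Set.mem_Iio]
    by_cases hy : y ∈ Metric.ball c R
    · rw [Set.indicator_of_mem hy, hGdef, Set.indicator_of_mem (hmem.mp hy), hgdef]
      simp only [hFdef, hnorm]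
    · rw [Set.indicator_of_notMem hy, hGdef,
        Set.indicator_of_notMem (fun hm => hy (hmem.mpr hm))]
  -- FTC computation
  have hcont : Continuous fun r : ℝ => r * g r := by
    refine continuous_id.mul (Continuous.div (by continuity)
      (((continuous_pow 2).add continuous_const).rpow_const fun r => Or.inr (by norm_num))
      fun r => (Real.rpow_pos_of_pos (by positivity) _).ne')
  have hderiv : ∀ r : ℝ,
      HasDerivAt (fun r : ℝ => -(r^2 + x₃^2) ^ (-(1:ℝ)/2) + x₃^2 * (r^2 + x₃^2) ^ (-(3:ℝ)/2))
        (r * g r) r := by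
    intro r
    have hu : 0 < r^2 + x₃^2 := by positivity
    have hu' : HasDerivAt (fun r : ℝ => r^2 + x₃^2) (2*r) r := by
      simpa using (hasDerivAt_pow 2 r).add_const (x₃^2)
    have d1 := hu'.rpow_const (p := -(1:ℝ)/2) (Or.inl hu.ne')
    have d2 := hu'.rpow_const (p := -(3:ℝ)/2) (Or.inl hu.ne')
    have := d1.neg.add (d2.const_mul (x₃^2))
    convert this using 1
    · rfl
    · rfl
    · rfl
    rw [hgdef]
    simp only
    rw [show (-(1:ℝ)/2 - 1) = 1 + -((5:ℝ)/2) by norm_num,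
        show (-(3:ℝ)/2 - 1) = -((5:ℝ)/2) by norm_num,
        Real.rpow_add hu, Real.rpow_one, div_eq_mul_inv, ← Real.rpow_neg hu.le]
    ring
  have hFTC : (∫ r in Set.Ioo (0:ℝ) R, r * g r)
      = x₃^2 * A ^ (-(3:ℝ)/2) - A ^ (-(1:ℝ)/2) := by
    rw [← MeasureTheory.integral_Ioc_eq_integral_Ioo, ← intervalIntegral.integral_of_le hR0.le]
    rw [intervalIntegral.integral_eq_sub_of_hasDerivAt (fun r _ => hderiv r)
      (hcont.intervalIntegrable 0 R)]
    have hRA : R^2 + x₃^2 = A := by rw [hRdef, hAdef]; ring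
    have e1 : ((x₃^2 : ℝ)) ^ (-(1:ℝ)/2) = x₃⁻¹ := by
      rw [← Real.rpow_natCast x₃ 2, ← Real.rpow_mul hx.le]
      norm_num
      exact Real.rpow_neg_one x₃
    have e2 : ((x₃^2 : ℝ)) ^ (-(3:ℝ)/2) = (x₃^3)⁻¹ := by
      rw [← Real.rpow_natCast x₃ 2, ← Real.rpow_mul hx.le]
      norm_num
    rw [hRA]
    simp only [zero_pow, ne_eq, OfNat.ofNat_ne_zero, not_false_eq_true, zero_add, e1, e2]
    field_simp
    ring
  have key : (∫ y in Metric.ball c R, F y) = -(π * h^2) / (2 * A ^ ((3:ℝ)/2)) := by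
    rw [← integral_indicator Metric.isOpen_ball.measurableSet]
    rw [show (fun y => (Metric.ball c R).indicator F y) = fun y => G ‖y - c‖ from funext hptwise]
    rw [integral_sub_right_eq_self (fun y : EuclideanSpace ℝ (Fin 2) => G ‖y‖) c]
    have hmain := integral_fun_norm_addHaar (volume : Measure (EuclideanSpace ℝ (Fin 2))) G
    have hvol : volume.real (Metric.ball (0 : EuclideanSpace ℝ (Fin 2)) 1) = π := by
      rw [Measure.real, EuclideanSpace.volume_ball]
      norm_num [Real.sq_sqrt Real.pi_nonneg, show (1:ℝ)+1 = 2 by norm_num, Real.Gamma_two, Real.pi_nonneg]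
    rw [hmain, hvol]
    have hind : (fun r : ℝ => r ^ (Module.finrank ℝ (EuclideanSpace ℝ (Fin 2)) - 1) • G r)
        = Set.indicator (Set.Iio R) (fun r => r * g r) := by
      funext r
      by_cases hr : r ∈ Set.Iio R
      · simp [hGdef, Set.indicator_of_mem hr]
      · simp [hGdef, Set.indicator_of_notMem hr]
    rw [hind, setIntegral_indicator measurableSet_Iio, Set.Ioi_inter_Iio, hFTC]
    have hA32 : (0:ℝ) < A ^ ((3:ℝ)/2) := Real.rpow_pos_of_pos hA0 _
    rw [show (-(1:ℝ)/2) = 1 + -((3:ℝ)/2) by norm_num, Real.rpow_add hA0, Real.rpow_one,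
      show (-(3:ℝ)/2) = -((3:ℝ)/2) by norm_num, Real.rpow_neg hA0.le]
    simp only [ENNReal.toReal_ofReal Real.pi_nonneg, nsmul_eq_mul, smul_eq_mul,
      finrank_euclideanSpace_fin, Nat.cast_ofNat]
    field_simp
    rw [hAdef]
    ring
  refine ⟨key, ?_⟩
  rw [key]
  have hA32 : (0:ℝ) < A ^ ((3:ℝ)/2) := Real.rpow_pos_of_pos hA0 _
  have hlb : (h^2/4) ^ ((3:ℝ)/2) ≤ A ^ ((3:ℝ)/2) :=
    Real.rpow_le_rpow (by positivity) (by rw [hAdef]; nlinarith) (by norm_num)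
  have hcube : (h^2/4 : ℝ) ^ ((3:ℝ)/2) = h^3/8 := by
    rw [show (h^2/4 : ℝ) = (h/2)^2 by ring, ← Real.rpow_natCast (h/2) 2,
      ← Real.rpow_mul (by positivity)]
    norm_num
    ring
  rw [abs_div, abs_neg, abs_of_nonneg (by positivity), abs_of_nonneg (by positivity)]
  rw [div_le_div_iff₀ (by positivity) hh]
  nlinarith [hA32, hlb, hcube, Real.pi_pos]
end

section
/- For any h > 0 and x₃ > 0, the integral over the disc V = B(0, h/2) ⊂ ℝ² of z₂²·(12x₃² - 3z₁² - 3z₂²)/(z₁² + z₂² + x₃²)^{7/2} with respect to (z₁,z₂) equals (3π/16)·h⁴·(x₃² + h²/4)^{-5/2}. -/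
open MeasureTheory Real

private lemma aux_ang' : ∫ θ in Set.Ioo (-π) π, Real.sin θ ^ 2 = π := by
  rw [← integral_Ioc_eq_integral_Ioo,
    ← intervalIntegral.integral_of_le (by linarith [pi_pos] : -π ≤ π), integral_sin_sq]
  simp [Real.sin_pi]

lemma aux_rad (a h : ℝ) (ha : 0 < a) (hh : 0 < h) :
    (∫ r in Set.Ioo 0 (h/2), r^3*(12*a - 3*r^2)/(r^2+a)^((7:ℝ)/2))
      = 3/16 * h^4 * (a + h^2/4)^(-(5:ℝ)/2) := by
  have h2 : (0:ℝ) ≤ h/2 := by positivity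
  rw [← integral_Ioc_eq_integral_Ioo, ← intervalIntegral.integral_of_le h2]
  set F : ℝ → ℝ := fun r =>
    (6*(r^2+a)^(-(1:ℝ)/2) - 12*a*(r^2+a)^(-(3:ℝ)/2) + 6*a^2*(r^2+a)^(-(5:ℝ)/2))/2 with hF
  have key : ∀ r ∈ Set.uIcc 0 (h/2),
      HasDerivAt F (r^3*(12*a - 3*r^2)/(r^2+a)^((7:ℝ)/2)) r := by
    intro r _
    have ht : (0:ℝ) < r^2 + a := by positivity
    have h1 : HasDerivAt (fun r : ℝ => r^2 + a) (2*r) r := by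
      simpa using (hasDerivAt_pow 2 r).add_const a
    have d : ∀ c : ℝ, HasDerivAt (fun r : ℝ => (r^2+a)^c) (c*(r^2+a)^(c-1)*(2*r)) r := by
      intro c
      exact (Real.hasDerivAt_rpow_const (Or.inl ht.ne')).comp r h1
    have := ((((d (-(1:ℝ)/2)).const_mul 6).sub ((d (-(3:ℝ)/2)).const_mul (12*a))).add
      ((d (-(5:ℝ)/2)).const_mul (6*a^2))).div_const 2
    refine this.congr_deriv ?_
    symm
    set t := r^2 + a with htdef
    set s := t ^ ((1:ℝ)/2) with hsdef
    have hs0 : 0 < s := Real.rpow_pos_of_pos ht _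
    have hts : s^2 = t := by
      rw [hsdef, ← Real.rpow_natCast (t ^ ((1:ℝ)/2)) 2, ← Real.rpow_mul ht.le]
      norm_num
    have pow_id : ∀ (c : ℝ) (n : ℕ), c + (1/2)*n = 0 → t ^ c = (s^n)⁻¹ := by
      intro c n hcn
      have : t ^ c * s^n = 1 := by
        rw [hsdef, ← Real.rpow_natCast (t ^ ((1:ℝ)/2)) n, ← Real.rpow_mul ht.le,
          ← Real.rpow_add ht, hcn, Real.rpow_zero]
      field_simp at this
      rw [eq_div_of_mul_eq (by positivity) this]
      simp [one_div]
    have e3 : t ^ (-(1:ℝ)/2-1) = (s^3)⁻¹ := pow_id _ 3 (by norm_num)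
    have e5 : t ^ (-(3:ℝ)/2-1) = (s^5)⁻¹ := pow_id _ 5 (by norm_num)
    have e7 : t ^ (-(5:ℝ)/2-1) = (s^7)⁻¹ := pow_id _ 7 (by norm_num)
    have e7' : t ^ ((7:ℝ)/2) = s^7 := by
      rw [hsdef, ← Real.rpow_natCast (t ^ ((1:ℝ)/2)) 7, ← Real.rpow_mul ht.le]
      norm_num
    rw [e3, e5, e7, e7']
    have hts' : s^2 = r^2 + a := hts
    field_simp
    linear_combination (6*r*(s^2 - 5*a + r^2)) * hts'
  have hcont : Continuous fun r : ℝ => r^3*(12*a - 3*r^2)/(r^2+a)^((7:ℝ)/2) := by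
    apply Continuous.div (by continuity)
    · apply Continuous.rpow_const (by continuity)
      intro x; left; positivity
    · intro x; positivity
  rw [intervalIntegral.integral_eq_sub_of_hasDerivAt key (hcont.intervalIntegrable _ _)]
  -- now evaluate
  have hT : (0:ℝ) < a + h^2/4 := by positivity
  set T := a + h^2/4 with hTdef
  set sT := T ^ ((1:ℝ)/2) with hsT
  have hsT0 : 0 < sT := Real.rpow_pos_of_pos hT _
  have hTs : sT^2 = T := by
    rw [hsT, ← Real.rpow_natCast (T ^ ((1:ℝ)/2)) 2, ← Real.rpow_mul hT.le]; norm_num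
  have pow_idT : ∀ (c : ℝ) (n : ℕ), c + (1/2)*n = 0 → T ^ c = (sT^n)⁻¹ := by
    intro c n hcn
    have : T ^ c * sT^n = 1 := by
      rw [hsT, ← Real.rpow_natCast (T ^ ((1:ℝ)/2)) n, ← Real.rpow_mul hT.le,
        ← Real.rpow_add hT, hcn, Real.rpow_zero]
    field_simp at this
    rw [eq_div_of_mul_eq (by positivity) this]
    simp [one_div]
  have hT0 : (h/2)^2 + a = T := by rw [hTdef]; ring
  have f1 : T ^ (-(1:ℝ)/2) = (sT^1)⁻¹ := pow_idT _ 1 (by norm_num)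
  have f3 : T ^ (-(3:ℝ)/2) = (sT^3)⁻¹ := pow_idT _ 3 (by norm_num)
  have f5 : T ^ (-(5:ℝ)/2) = (sT^5)⁻¹ := pow_idT _ 5 (by norm_num)
  -- F 0
  have sa0 : 0 < a ^ ((1:ℝ)/2) := Real.rpow_pos_of_pos ha _
  set sa := a ^ ((1:ℝ)/2) with hsa
  have has : sa^2 = a := by
    rw [hsa, ← Real.rpow_natCast (a ^ ((1:ℝ)/2)) 2, ← Real.rpow_mul ha.le]; norm_num
  have pow_ida : ∀ (c : ℝ) (n : ℕ), c + (1/2)*n = 0 → a ^ c = (sa^n)⁻¹ := by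
    intro c n hcn
    have : a ^ c * sa^n = 1 := by
      rw [hsa, ← Real.rpow_natCast (a ^ ((1:ℝ)/2)) n, ← Real.rpow_mul ha.le,
        ← Real.rpow_add ha, hcn, Real.rpow_zero]
    field_simp at this
    rw [eq_div_of_mul_eq (by positivity) this]
    simp [one_div]
  have g1 : a ^ (-(1:ℝ)/2) = (sa^1)⁻¹ := pow_ida _ 1 (by norm_num)
  have g3 : a ^ (-(3:ℝ)/2) = (sa^3)⁻¹ := pow_ida _ 3 (by norm_num)
  have g5 : a ^ (-(5:ℝ)/2) = (sa^5)⁻¹ := pow_ida _ 5 (by norm_num)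
  rw [hF]
  simp only [hT0, show (0:ℝ)^2 + a = a by norm_num]
  rw [f1, f3, f5, g1, g3, g5]
  have hTs' : sT^2 = a + h^2/4 := hTs
  have hh2 : h^2 = 4*(sT^2 - sa^2) := by rw [hTs', has]; ring
  have h4 : h^4 = 16*(sT^2 - sa^2)^2 := by
    linear_combination (h^2 + 4*(sT^2 - sa^2))*hh2
  rw [h4, ← has]
  field_simp
  ring

/-- The integral over the disc `V = B(0, h/2) ⊂ ℝ²` of
`z₂²(12x₃² - 3z₁² - 3z₂²)/(z₁² + z₂² + x₃²)^{7/2}` equals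
`(3π/16) h⁴ (x₃² + h²/4)^{-5/2}`. -/
theorem stmt_10 (h x₃ : ℝ) (hh : 0 < h) (hx : 0 < x₃) :
    (∫ z in Metric.ball (0 : EuclideanSpace ℝ (Fin 2)) (h/2),
        (z 1)^2 * (12*x₃^2 - 3*(z 0)^2 - 3*(z 1)^2)
          / ((z 0)^2 + (z 1)^2 + x₃^2) ^ ((7:ℝ)/2))
      = (3*π/16) * h^4 * (x₃^2 + h^2/4) ^ (-(5:ℝ)/2) := by
  have ha : 0 < x₃^2 := by positivity
  set e := (MeasurableEquiv.toLp 2 (Fin 2 → ℝ)).symm.trans (MeasurableEquiv.finTwoArrow)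
    with he
  have hme : MeasurePreserving (e : EuclideanSpace ℝ (Fin 2) → ℝ × ℝ) volume volume :=
    (volume_preserving_finTwoArrow ℝ).comp
      (EuclideanSpace.volume_preserving_symm_measurableEquiv_toLp (Fin 2))
  have h0 : ∀ p : ℝ × ℝ, (e.symm p) 0 = p.1 := fun p => rfl
  have h1 : ∀ p : ℝ × ℝ, (e.symm p) 1 = p.2 := fun p => rfl
  have hpre : e.symm ⁻¹' (Metric.ball (0 : EuclideanSpace ℝ (Fin 2)) (h/2))
      = {p : ℝ × ℝ | p.1^2 + p.2^2 < (h/2)^2} := by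
    ext p
    simp only [Set.mem_preimage, Metric.mem_ball, Set.mem_setOf_eq, dist_zero_right,
      EuclideanSpace.norm_eq, Fin.sum_univ_two, h0, h1, Real.norm_eq_abs, sq_abs]
    exact Real.sqrt_lt' (by positivity)
  set S : Set (ℝ × ℝ) := {p : ℝ × ℝ | p.1^2 + p.2^2 < (h/2)^2} with hS
  have hSm : MeasurableSet S :=
    ((isOpen_lt (by fun_prop) continuous_const).measurableSet)
  set G : ℝ × ℝ → ℝ := fun p =>
    p.2^2 * (12*x₃^2 - 3*p.1^2 - 3*p.2^2) / (p.1^2 + p.2^2 + x₃^2) ^ ((7:ℝ)/2) with hG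
  have step1 : (∫ z in Metric.ball (0 : EuclideanSpace ℝ (Fin 2)) (h/2),
        (z 1)^2 * (12*x₃^2 - 3*(z 0)^2 - 3*(z 1)^2)
          / ((z 0)^2 + (z 1)^2 + x₃^2) ^ ((7:ℝ)/2))
      = ∫ p in S, G p := by
    rw [← (hme.symm e).setIntegral_preimage_emb e.symm.measurableEmbedding
      (fun z => (z 1)^2 * (12*x₃^2 - 3*(z 0)^2 - 3*(z 1)^2)
          / ((z 0)^2 + (z 1)^2 + x₃^2) ^ ((7:ℝ)/2)) _, hpre]
    simp only [h0, h1, hG]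
  rw [step1, ← integral_indicator hSm, ← integral_comp_polarCoord_symm]
  have htarget : polarCoord.target = Set.Ioi (0:ℝ) ×ˢ Set.Ioo (-π) π := rfl
  rw [htarget]
  set f : ℝ → ℝ := Set.indicator (Set.Ioo 0 (h/2))
    (fun r => r^3*(12*x₃^2 - 3*r^2)/(r^2+x₃^2)^((7:ℝ)/2)) with hf
  have congrstep : (∫ p in Set.Ioi (0:ℝ) ×ˢ Set.Ioo (-π) π,
        p.1 • Set.indicator S G (polarCoord.symm p))
      = ∫ p in Set.Ioi (0:ℝ) ×ˢ Set.Ioo (-π) π, f p.1 * Real.sin p.2 ^ 2 := by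
    apply setIntegral_congr_fun (measurableSet_Ioi.prod measurableSet_Ioo)
    rintro ⟨r, θ⟩ ⟨hr, -⟩
    simp only [Set.mem_Ioi] at hr
    have hsymm : polarCoord.symm (r, θ) = (r * cos θ, r * sin θ) := rfl
    simp only []
    rw [hsymm]
    have hrt : (r*cos θ)^2 + (r*sin θ)^2 = r^2 := by
      linear_combination r^2 * (sin_sq_add_cos_sq θ)
    by_cases hr2 : r < h/2
    · have hmem : (r * cos θ, r * sin θ) ∈ S := by
        simp only [hS, Set.mem_setOf_eq]
        rw [hrt]
        have : 0 < h/2 := by positivity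
        nlinarith
      rw [Set.indicator_of_mem hmem, hf,
        Set.indicator_of_mem (Set.mem_Ioo.mpr ⟨hr, hr2⟩)]
      simp only [hG, smul_eq_mul]
      rw [hrt]
      have hd : (0:ℝ) < (r^2 + x₃^2) ^ ((7:ℝ)/2) := by positivity
      field_simp
      linear_combination (-3*r^2*Real.sin θ^2) * (sin_sq_add_cos_sq θ)
    · have hmem : (r * cos θ, r * sin θ) ∉ S := by
        simp only [hS, Set.mem_setOf_eq, not_lt]
        rw [hrt]
        push_neg at hr2
        nlinarith
      rw [Set.indicator_of_notMem hmem, hf,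
        Set.indicator_of_notMem (by simp [Set.mem_Ioo]; intro _; linarith)]
      simp
  rw [congrstep, Measure.volume_eq_prod,
    setIntegral_prod_mul f (fun θ => Real.sin θ ^ 2) (Set.Ioi 0) (Set.Ioo (-π) π)]
  have hfint : (∫ r in Set.Ioi (0:ℝ), f r) = 3/16 * h^4 * (x₃^2 + h^2/4)^(-(5:ℝ)/2) := by
    rw [hf, setIntegral_indicator measurableSet_Ioo,
      show Set.Ioi (0:ℝ) ∩ Set.Ioo 0 (h/2) = Set.Ioo 0 (h/2) from
        Set.inter_eq_self_of_subset_right Set.Ioo_subset_Ioi_self]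
    exact aux_rad (x₃^2) h ha hh
  rw [hfint, aux_ang']
  ring
end

section
/- Let D ⊂ ℝᵈ be a bounded convex domain, α ∈ (0,2), and let φ : ℝᵈ → [0,∞) be a function vanishing on D^c which satisfies: for every x₀ ∈ ∂D, x ∈ D and λ ∈ (0,1), φ(λx + (1-λ)x₀) ≥ λ^α φ(x). Then for all x, y ∈ D and λ ∈ (0,1), φ(λx + (1-λ)y) ≥ (1/2)(λ^α φ(x) + (1-λ)^α φ(y)). -/
/-- If `D ⊂ ℝᵈ` is a bounded convex domain, `α ∈ (0,2)`, and `φ ≥ 0` vanishes on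
`Dᶜ` and satisfies the boundary interpolation inequality
`φ(λx + (1-λ)x₀) ≥ λ^α φ(x)` for `x₀ ∈ ∂D`, `x ∈ D`, `λ ∈ (0,1)`, then
`φ(λx + (1-λ)y) ≥ ½(λ^α φ(x) + (1-λ)^α φ(y))` for all `x, y ∈ D`, `λ ∈ (0,1)`. -/
theorem stmt_14 (d : ℕ) (α : ℝ) (hα : α ∈ Set.Ioo (0:ℝ) 2)
    (D : Set (EuclideanSpace ℝ (Fin d))) (hopen : IsOpen D)
    (hconv : Convex ℝ D) (hbdd : Bornology.IsBounded D)
    (φ : EuclideanSpace ℝ (Fin d) → ℝ)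
    (hnn : ∀ x, 0 ≤ φ x) (h0 : ∀ x ∉ D, φ x = 0)
    (hbdry : ∀ x₀ ∈ frontier D, ∀ x ∈ D, ∀ t : ℝ, t ∈ Set.Ioo (0:ℝ) 1 →
      t ^ α * φ x ≤ φ (t • x + (1 - t) • x₀)) :
    ∀ x ∈ D, ∀ y ∈ D, ∀ t : ℝ, t ∈ Set.Ioo (0:ℝ) 1 →
      (1/2) * (t ^ α * φ x + (1 - t) ^ α * φ y) ≤ φ (t • x + (1 - t) • y) := by
  obtain ⟨hα0, hα2⟩ := hα
  have key : ∀ x ∈ D, ∀ y ∈ D, ∀ t : ℝ, t ∈ Set.Ioo (0:ℝ) 1 →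
      t ^ α * φ x ≤ φ (t • x + (1 - t) • y) := by
    intro x hx y hy t ht
    obtain ⟨ht0, ht1⟩ := ht
    by_cases hxy : x = y
    · subst hxy
      have hc : t • x + (1 - t) • x = x := by
        rw [← add_smul]; simp
      rw [hc]
      calc t ^ α * φ x ≤ 1 * φ x := by
            apply mul_le_mul_of_nonneg_right _ (hnn x)
            exact Real.rpow_le_one ht0.le ht1.le hα0.le
        _ = φ x := one_mul _
    · set g : ℝ → EuclideanSpace ℝ (Fin d) := fun u => x + u • (y - x) with hg
      have hgc : Continuous g := by
        apply continuous_const.add (continuous_id.smul continuous_const)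
      set S : Set ℝ := g ⁻¹' D with hS
      have hSopen : IsOpen S := hopen.preimage hgc
      have h1S : (1:ℝ) ∈ S := by
        simp only [hS, Set.mem_preimage, hg]
        simpa using hy
      have hSne : S.Nonempty := ⟨1, h1S⟩
      obtain ⟨M, hM⟩ := hbdd.exists_norm_le
      have hyx : (0:ℝ) < ‖y - x‖ := by
        simp [norm_pos_iff, sub_ne_zero, Ne.symm hxy]
      have hSbdd : BddAbove S := by
        refine ⟨(M + ‖x‖) / ‖y - x‖, fun u hu => ?_⟩
        have h1 : ‖g u‖ ≤ M := hM _ hu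
        have h2 : ‖g u - x‖ = |u| * ‖y - x‖ := by
          simp [hg, norm_smul, Real.norm_eq_abs]
        have h3 : ‖g u - x‖ ≤ M + ‖x‖ := by
          calc ‖g u - x‖ ≤ ‖g u‖ + ‖x‖ := norm_sub_le _ _
            _ ≤ M + ‖x‖ := by linarith
        have h4 : |u| * ‖y - x‖ ≤ M + ‖x‖ := by rw [← h2]; exact h3
        rw [le_div_iff₀ hyx]
        calc u * ‖y - x‖ ≤ |u| * ‖y - x‖ :=
              mul_le_mul_of_nonneg_right (le_abs_self u) hyx.le
          _ ≤ M + ‖x‖ := h4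
      set r := sSup S with hr
      have hr1 : 1 < r := by
        obtain ⟨ε, hε, hball⟩ := Metric.isOpen_iff.1 hSopen 1 h1S
        have : (1 + ε/2 : ℝ) ∈ S := by
          apply hball
          rw [Metric.mem_ball, Real.dist_eq]
          rw [show (1 + ε/2 - 1 : ℝ) = ε/2 by ring, abs_of_pos (half_pos hε)]
          linarith
        have := le_csSup hSbdd this
        linarith
      have hrpos : 0 < r := lt_trans one_pos hr1
      have hrne : r ≠ 0 := hrpos.ne'
      have hrS : r ∉ S := by
        intro hrS
        obtain ⟨ε, hε, hball⟩ := Metric.isOpen_iff.1 hSopen r hrS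
        have : (r + ε/2 : ℝ) ∈ S := by
          apply hball
          rw [Metric.mem_ball, Real.dist_eq]
          rw [show (r + ε/2 - r : ℝ) = ε/2 by ring, abs_of_pos (half_pos hε)]
          linarith
        have := le_csSup hSbdd this
        linarith
      have hrcl : g r ∈ closure D := by
        have h5 : r ∈ closure S := csSup_mem_closure hSne hSbdd
        have h6 : closure S ⊆ g ⁻¹' (closure D) :=
          closure_minimal (fun u hu => subset_closure hu)
            (isClosed_closure.preimage hgc)
        exact h6 h5
      have hfront : g r ∈ frontier D := by
        rw [frontier, hopen.interior_eq]
        exact ⟨hrcl, hrS⟩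
      set s := 1 - (1 - t)/r with hs_def
      have hts : t ≤ s := by
        rw [hs_def]
        have h7 : (1 - t)/r ≤ 1 - t := by
          rw [div_le_iff₀ hrpos]
          nlinarith
        linarith
      have hs : s ∈ Set.Ioo (0:ℝ) 1 := by
        constructor
        · linarith
        · rw [hs_def]
          have : 0 < (1 - t)/r := div_pos (by linarith) hrpos
          linarith
      have heq : s • x + (1 - s) • g r = t • x + (1 - t) • y := by
        have h1s : (1 - s : ℝ) = (1 - t)/r := by rw [hs_def]; ring
        rw [h1s, hg]
        simp only [smul_add, smul_smul, smul_sub]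
        rw [div_mul_cancel₀ _ hrne]
        rw [hs_def]
        module
      have hb := hbdry (g r) hfront x hx s hs
      rw [heq] at hb
      calc t ^ α * φ x ≤ s ^ α * φ x :=
            mul_le_mul_of_nonneg_right
              (Real.rpow_le_rpow ht0.le hts hα0.le) (hnn x)
        _ ≤ _ := hb
  intro x hx y hy t ht
  obtain ⟨ht0, ht1⟩ := ht
  have A := key x hx y hy t ⟨ht0, ht1⟩
  have B := key y hy x hx (1 - t) ⟨by linarith, by linarith⟩
  have hcomm : (1 - t) • y + (1 - (1 - t)) • x = t • x + (1 - t) • y := by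
    rw [sub_sub_cancel]; exact add_comm _ _
  rw [hcomm] at B
  linarith
end
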